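/- With the extended Fisher information matrix F̄(p) reordered as F̄₁(p) = P F̄(p) Pᵀ, B the incidence matrix of the oriented ranging graph, and Q(p) the 2|E|×2|E| block matrix of weighted diagonal matrices Q_{μν}(p), one has F̄₁(p) = (I₂ ⊗ B) Q(p) (I₂ ⊗ Bᵀ), where ⊗ denotes the Kronecker product and I₂ is the 2×2 identity matrix. -/

import Mathlib

open Matrix

/-- Euclidean distance between points `(x i, y i)` and `(x j, y j)`. -/
noncomputable def edist2 {N : ℕ} (x y : Fin N → ℝ) (i j : Fin N) : ℝ :=
  Real.sqrt ((x i - x j) ^ 2 + (y i - y j) ^ 2)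

/-- Off-diagonal 2×2 block `F_ij` of the Fisher information matrix. -/
noncomputable def offBlock {N : ℕ} (x y : Fin N → ℝ) (Adj : Fin N → Fin N → Bool)
    (σ α : ℝ) (i j : Fin N) : Matrix (Fin 2) (Fin 2) ℝ :=
  -((if Adj i j then (1 : ℝ) else 0) / (σ ^ 2 * edist2 x y i j ^ (2 * α))) •
    !![(x i - x j) ^ 2, (x i - x j) * (y i - y j);
       (x i - x j) * (y i - y j), (y i - y j) ^ 2]

/-- The 2×2 block of the extended FIM: `F_ii = -∑_{k ∈ N_i} F_ik`, `F_ij` off the diagonal. -/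
noncomputable def fimBlock {N : ℕ} (x y : Fin N → ℝ) (Adj : Fin N → Fin N → Bool)
    (σ α : ℝ) (i j : Fin N) : Matrix (Fin 2) (Fin 2) ℝ :=
  if i = j then
    -∑ k ∈ Finset.univ.filter (fun k => Adj i k = true), offBlock x y Adj σ α i k
  else offBlock x y Adj σ α i j

/-- Extended Fisher information matrix `F̄(p)`, indexed by (vertex, coordinate), i.e. in the
interleaved coordinate ordering `(x₁, y₁, …, x_N, y_N)`. -/
noncomputable def Fbar {N : ℕ} (x y : Fin N → ℝ) (Adj : Fin N → Fin N → Bool)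
    (σ α : ℝ) : Matrix (Fin N × Fin 2) (Fin N × Fin 2) ℝ :=
  Matrix.of fun r c => fimBlock x y Adj σ α r.1 c.1 r.2 c.2

/-- Permutation matrix reordering coordinates from `(x₁, y₁, …, x_N, y_N)` to
`(x₁, …, x_N, y₁, …, y_N)`. -/
def permP (N : ℕ) : Matrix (Fin 2 × Fin N) (Fin N × Fin 2) ℝ :=
  Matrix.of fun r c => if r = (c.2, c.1) then 1 else 0

/-- Reordered extended FIM `F̄₁(p) = P F̄(p) Pᵀ`. -/
noncomputable def Fbar1 {N : ℕ} (x y : Fin N → ℝ) (Adj : Fin N → Fin N → Bool)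
    (σ α : ℝ) : Matrix (Fin 2 × Fin N) (Fin 2 × Fin N) ℝ :=
  permP N * Fbar x y Adj σ α * (permP N)ᵀ


open Kronecker

/-- Incidence matrix `B` of the oriented graph with edges `e = (e1 e, e2 e)`. -/
def incB {N : ℕ} {ι : Type*} (e1 e2 : ι → Fin N) : Matrix (Fin N) ι ℝ :=
  Matrix.of fun i e => if i = e1 e then 1 else if i = e2 e then -1 else 0

/-- The 2|E|×2|E| block matrix `Q(p) = [[Q_xx, Q_xy], [Q_yx, Q_yy]]`, where `Q_μν(p)` is the
|E|×|E| diagonal matrix with diagonal entry `(μ_i-μ_j)(ν_i-ν_j)/(σ² d_ij^{2α})` for edge `(i,j)`. -/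
noncomputable def Qmat {N : ℕ} (x y : Fin N → ℝ) (σ α : ℝ) {ι : Type*} [DecidableEq ι]
    (e1 e2 : ι → Fin N) : Matrix (Fin 2 × ι) (Fin 2 × ι) ℝ :=
  Matrix.of fun r c =>
    if r.2 = c.2 then
      (![x, y] r.1 (e1 r.2) - ![x, y] r.1 (e2 r.2)) *
        (![x, y] c.1 (e1 r.2) - ![x, y] c.1 (e2 r.2)) /
        (σ ^ 2 * edist2 x y (e1 r.2) (e2 r.2) ^ (2 * α))
    else 0

/-!
Entrywise, the `((μ, i), (ν, j))` entry of `(I₂ ⊗ B) Q (I₂ ⊗ Bᵀ)` is `∑ₑ B_ie B_je w_μν(e)`, where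
the weight `w_μν` of an edge is symmetric in its endpoints and hence a function on `Sym2`. For
`i ≠ j`, `B_ie B_je` is `-1` exactly when `e` joins `i` and `j`, and `B_ie²` is `1` exactly when
`e` is incident to `i`. Since every edge of the graph is listed exactly once, the sums collapse
to `-w_μν(ij)` (or `0`) and `∑_{k ∈ N_i} w_μν(ik)`, which are the blocks `F_ij` and `F_ii`.
-/

namespace Sym2

variable {V M : Type*} [Fintype V] [DecidableEq V] [AddCommMonoid M]

theorem sum_ite_eq_mk (z : Sym2 V) (i : V) (w : Sym2 V → M) :
    ∑ k, (if z = s(i, k) then w s(i, k) else 0) = if i ∈ z then w z else 0 := by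
  by_cases hi : i ∈ z
  · rw [if_pos hi, ← other_spec hi]
    simp only [congr_right, Finset.sum_ite_eq, Finset.mem_univ, if_true]
  · rw [if_neg hi]
    refine Finset.sum_eq_zero fun k _ => if_neg ?_
    rintro rfl
    exact hi (mem_mk_left i k)

end Sym2

section Incidence

variable {N : ℕ} {ι : Type*} (e1 e2 : ι → Fin N)

theorem incB_mul_self (i : Fin N) (e : ι) :
    incB e1 e2 i e * incB e1 e2 i e = if i ∈ s(e1 e, e2 e) then 1 else 0 := by
  simp only [incB, Matrix.of_apply, Sym2.mem_iff]
  split_ifs <;> simp_all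

theorem incB_mul_incB_of_ne {i j : Fin N} (hij : i ≠ j) (e : ι) :
    incB e1 e2 i e * incB e1 e2 j e = if s(e1 e, e2 e) = s(i, j) then -1 else 0 := by
  simp only [incB, Matrix.of_apply, Sym2.eq_iff]
  split_ifs <;> grind

variable [Fintype ι] {Adj : Fin N → Fin N → Bool}

theorem sum_ite_mk_eq_ite_adj (hsym : ∀ i j, Adj i j = Adj j i)
    (hedge : ∀ e, Adj (e1 e) (e2 e) = true)
    (huniq : ∀ i j, Adj i j = true →
      ∃! e : ι, (e1 e = i ∧ e2 e = j) ∨ (e1 e = j ∧ e2 e = i))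
    (i k : Fin N) (c : ℝ) :
    ∑ e, (if s(e1 e, e2 e) = s(i, k) then c else 0) = if Adj i k then c else 0 := by
  simp only [Sym2.eq_iff]
  by_cases hik : Adj i k
  · obtain ⟨e₀, h₀, he₀⟩ := huniq i k hik
    rw [if_pos hik, Finset.sum_eq_single e₀ (fun e _ he => if_neg (mt (he₀ e) he))
      (by simp), if_pos h₀]
  · rw [if_neg hik]
    refine Finset.sum_eq_zero fun e _ => if_neg ?_
    rintro (⟨rfl, rfl⟩ | ⟨rfl, rfl⟩)
    · exact hik (hedge e)
    · exact hik (hsym _ _ ▸ hedge e)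

theorem sum_incB_mul_incB_mul (hsym : ∀ i j, Adj i j = Adj j i)
    (hedge : ∀ e, Adj (e1 e) (e2 e) = true)
    (huniq : ∀ i j, Adj i j = true →
      ∃! e : ι, (e1 e = i ∧ e2 e = j) ∨ (e1 e = j ∧ e2 e = i))
    (w : Sym2 (Fin N) → ℝ) (i j : Fin N) :
    ∑ e, incB e1 e2 i e * incB e1 e2 j e * w s(e1 e, e2 e) =
      if i = j then ∑ k ∈ Finset.univ.filter (fun k => Adj i k = true), w s(i, k)
      else if Adj i j then -w s(i, j) else 0 := by
  rcases eq_or_ne i j with rfl | hij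
  · rw [if_pos rfl, Finset.sum_filter]
    calc ∑ e, incB e1 e2 i e * incB e1 e2 i e * w s(e1 e, e2 e)
        = ∑ e, if i ∈ s(e1 e, e2 e) then w s(e1 e, e2 e) else 0 := by
          simp_rw [incB_mul_self, ite_mul, one_mul, zero_mul]
      _ = ∑ k, ∑ e, if s(e1 e, e2 e) = s(i, k) then w s(i, k) else 0 := by
          rw [Finset.sum_comm]; simp_rw [Sym2.sum_ite_eq_mk]
      _ = ∑ k, if Adj i k then w s(i, k) else 0 := by
          simp_rw [sum_ite_mk_eq_ite_adj e1 e2 hsym hedge huniq]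
  · rw [if_neg hij, ← sum_ite_mk_eq_ite_adj e1 e2 hsym hedge huniq]
    refine Finset.sum_congr rfl fun e _ => ?_
    rw [incB_mul_incB_of_ne e1 e2 hij]
    split_ifs with h
    · rw [h, neg_one_mul]
    · rw [zero_mul]

end Incidence

section Kronecker

variable {R l m n o : Type*} [CommSemiring R] [Fintype l] [DecidableEq l] [Fintype n]
  [Fintype o]

theorem one_kronecker_mul_mul_one_kronecker_apply (A : Matrix m n R)
    (D : Matrix (l × n) (l × o) R) (C : Matrix o m R) (μ ν : l) (i j : m) :
    ((1 : Matrix l l R) ⊗ₖ A * D * ((1 : Matrix l l R) ⊗ₖ C)) (μ, i) (ν, j) =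
      (A * Matrix.of (fun e e' => D (μ, e) (ν, e')) * C) i j := by
  simp [Matrix.mul_apply, Matrix.one_apply, Fintype.sum_prod_type, Finset.sum_mul]

end Kronecker

section Fisher

variable {N : ℕ} (x y : Fin N → ℝ) (σ α : ℝ)

theorem edist2_comm (a b : Fin N) : edist2 x y a b = edist2 x y b a := by
  unfold edist2; ring_nf

noncomputable def edgeWeight (μ ν : Fin 2) : Sym2 (Fin N) → ℝ :=
  Sym2.lift ⟨fun a b => (![x, y] μ a - ![x, y] μ b) * (![x, y] ν a - ![x, y] ν b) /
    (σ ^ 2 * edist2 x y a b ^ (2 * α)), fun a b => by dsimp only; rw [edist2_comm]; ring⟩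

variable {x y σ α}

theorem offBlock_apply (Adj : Fin N → Fin N → Bool) (a b : Fin N) (μ ν : Fin 2) :
    offBlock x y Adj σ α a b μ ν = -(if Adj a b then edgeWeight x y σ α μ ν s(a, b) else 0) := by
  by_cases h : Adj a b <;> fin_cases μ <;> fin_cases ν <;> simp [offBlock, edgeWeight, h] <;> ring

theorem fimBlock_apply (Adj : Fin N → Fin N → Bool) (i j : Fin N) (μ ν : Fin 2) :
    fimBlock x y Adj σ α i j μ ν =
      if i = j then ∑ k ∈ Finset.univ.filter (fun k => Adj i k = true),
        edgeWeight x y σ α μ ν s(i, k)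
      else if Adj i j then -edgeWeight x y σ α μ ν s(i, j) else 0 := by
  unfold fimBlock
  split_ifs with _ hA
  · simp only [Matrix.neg_apply, Matrix.sum_apply, offBlock_apply, ← Finset.sum_neg_distrib,
      neg_neg]
    exact Finset.sum_congr rfl fun k hk => if_pos (Finset.mem_filter.mp hk).2
  · rw [offBlock_apply, if_pos hA]
  · rw [offBlock_apply, if_neg hA, neg_zero]

theorem Fbar1_apply (Adj : Fin N → Fin N → Bool) (μ ν : Fin 2) (i j : Fin N) :
    Fbar1 x y Adj σ α (μ, i) (ν, j) = fimBlock x y Adj σ α i j μ ν := by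
  simp [Fbar1, Matrix.mul_apply, permP, Fbar, Fintype.sum_prod_type, Prod.ext_iff, ite_and]

theorem Qmat_block_eq_diagonal {ι : Type*} [DecidableEq ι] (e1 e2 : ι → Fin N) (μ ν : Fin 2) :
    Matrix.of (fun e e' => Qmat x y σ α e1 e2 (μ, e) (ν, e')) =
      Matrix.diagonal fun e => edgeWeight x y σ α μ ν s(e1 e, e2 e) := by
  ext e e'
  simp [Qmat, edgeWeight, Matrix.diagonal]

end Fisher

theorem fbar1_eq_kronecker_incidence_general
    (n m : ℕ) (x y : Fin (n + m) → ℝ) (Adj : Fin (n + m) → Fin (n + m) → Bool)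
    (hsym : ∀ i j, Adj i j = Adj j i)
    (σ α : ℝ)
    {ι : Type*} [Fintype ι] [DecidableEq ι]
    (e1 e2 : ι → Fin (n + m))
    (hedge : ∀ e : ι, Adj (e1 e) (e2 e) = true)
    (huniq : ∀ i j, Adj i j = true →
      ∃! e : ι, (e1 e = i ∧ e2 e = j) ∨ (e1 e = j ∧ e2 e = i)) :
    Fbar1 x y Adj σ α =
      ((1 : Matrix (Fin 2) (Fin 2) ℝ) ⊗ₖ incB e1 e2) * Qmat x y σ α e1 e2 *
        ((1 : Matrix (Fin 2) (Fin 2) ℝ) ⊗ₖ (incB e1 e2)ᵀ) := by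
  ext ⟨μ, i⟩ ⟨ν, j⟩
  rw [Fbar1_apply, fimBlock_apply, one_kronecker_mul_mul_one_kronecker_apply,
    Qmat_block_eq_diagonal, ← sum_incB_mul_incB_mul e1 e2 hsym hedge huniq, Matrix.mul_apply]
  simp_rw [Matrix.mul_diagonal, Matrix.transpose_apply, mul_right_comm]

/-- `F̄₁(p) = (I₂ ⊗ B) Q(p) (I₂ ⊗ Bᵀ)`. -/
theorem fbar1_eq_kronecker_incidence
    (n m : ℕ) (x y : Fin (n + m) → ℝ) (Adj : Fin (n + m) → Fin (n + m) → Bool)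
    (hsym : ∀ i j, Adj i j = Adj j i) (hirr : ∀ i, Adj i i = false)
    (hne : ∀ i j, Adj i j = true → (x i, y i) ≠ (x j, y j))
    (σ α : ℝ) (hσ : 0 < σ)
    {ι : Type*} [Fintype ι] [DecidableEq ι]
    (e1 e2 : ι → Fin (n + m))
    (hedge : ∀ e : ι, Adj (e1 e) (e2 e) = true)
    (huniq : ∀ i j, Adj i j = true →
      ∃! e : ι, (e1 e = i ∧ e2 e = j) ∨ (e1 e = j ∧ e2 e = i)) :
    Fbar1 x y Adj σ α =
      ((1 : Matrix (Fin 2) (Fin 2) ℝ) ⊗ₖ incB e1 e2) * Qmat x y σ α e1 e2 *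
        ((1 : Matrix (Fin 2) (Fin 2) ℝ) ⊗ₖ (incB e1 e2)ᵀ) :=
  fbar1_eq_kronecker_incidence_general n m x y Adj hsym σ α e1 e2 hedge huniq
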